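/- Fix X ∈ ℝ^{n×p} and suppose f is differentiable at the point X·A(X) with Frobenius gradient G₀ := ∇f(X·A(X)). Then h is differentiable at X and its Frobenius gradient is ∇h(X) = G₀·A(X) − X·Φ(Xᵀ·G₀) + β·X·(XᵀX − I_p). In particular, if X ∈ S_{n,p} then ∇h(X) = ∇f(X) − X·Φ(Xᵀ∇f(X)) = grad f(X). -/

import Mathlib

open Matrix

attribute [local instance] Matrix.frobeniusNormedAddCommGroup Matrix.frobeniusNormedSpace

namespace ExPen

noncomputable def finner {n p : ℕ} (A B : Matrix (Fin n) (Fin p) ℝ) : ℝ := (Aᵀ * B).trace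

noncomputable def Phi {p : ℕ} (M : Matrix (Fin p) (Fin p) ℝ) : Matrix (Fin p) (Fin p) ℝ :=
  (1 / 2 : ℝ) • (M + Mᵀ)

noncomputable def Amap {n p : ℕ} (X : Matrix (Fin n) (Fin p) ℝ) : Matrix (Fin p) (Fin p) ℝ :=
  (3 / 2 : ℝ) • (1 : Matrix (Fin p) (Fin p) ℝ) - (1 / 2 : ℝ) • (Xᵀ * X)

noncomputable def g {n p : ℕ} (f : Matrix (Fin n) (Fin p) ℝ → ℝ)
    (X : Matrix (Fin n) (Fin p) ℝ) : ℝ := f (X * Amap X)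

noncomputable def hpen {n p : ℕ} (f : Matrix (Fin n) (Fin p) ℝ → ℝ) (β : ℝ)
    (X : Matrix (Fin n) (Fin p) ℝ) : ℝ := g f X + β / 4 * ‖Xᵀ * X - 1‖ ^ 2

noncomputable def dualCLM {n p : ℕ} (G : Matrix (Fin n) (Fin p) ℝ) :
    Matrix (Fin n) (Fin p) ℝ →L[ℝ] ℝ :=
  LinearMap.toContinuousLinearMap
    { toFun := fun D => (Gᵀ * D).trace
      map_add' := by intro D E; simp [Matrix.mul_add]
      map_smul' := by intro c D; simp [Matrix.mul_smul] }

def HasGradAt {n p : ℕ} (φ : Matrix (Fin n) (Fin p) ℝ → ℝ)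
    (X G : Matrix (Fin n) (Fin p) ℝ) : Prop :=
  HasFDerivAt φ (dualCLM G) X

noncomputable def specNorm {n p : ℕ} (X : Matrix (Fin n) (Fin p) ℝ) : ℝ :=
  ‖LinearMap.toContinuousLinearMap
    (Matrix.toEuclideanLin X : EuclideanSpace ℝ (Fin p) →ₗ[ℝ] EuclideanSpace ℝ (Fin n))‖

lemma posSemidef_tmul {n p : ℕ} (X : Matrix (Fin n) (Fin p) ℝ) : (Xᵀ * X).PosSemidef := by
  simpa [Matrix.conjTranspose_eq_transpose_of_trivial] using
    Matrix.posSemidef_conjTranspose_mul_self X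

noncomputable def Pst {n p : ℕ} (X : Matrix (Fin n) (Fin p) ℝ) : Matrix (Fin n) (Fin p) ℝ :=
  X * (((posSemidef_tmul X).1.eigenvectorUnitary.1 *
    diagonal ((RCLike.ofReal : ℝ → ℝ) ∘ (√·) ∘ (posSemidef_tmul X).1.eigenvalues) *
    (star (posSemidef_tmul X).1.eigenvectorUnitary : Matrix (Fin p) (Fin p) ℝ) :
      Matrix (Fin p) (Fin p) ℝ))⁻¹

/-!
Write `h = f ∘ μ + (β/4)‖YᵀY - I‖²` with `μ(Y) = Y A(Y)`. The derivative of `μ` at `X` is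
`D ↦ D A(X) - ½ X (DᵀX + XᵀD)`, so by the chain rule the gradient of `g` is the adjoint of this map
applied to `G₀`. Everything reduces to the identity `tr(Mᵀ(DᵀX + XᵀD)) = ⟨X(M + Mᵀ), D⟩`, which
produces the symmetric part `Φ(XᵀG₀)`, and with `M = 2(XᵀX - I)` (symmetric) the penalty gradient
`βX(XᵀX - I)`. On the Stiefel manifold `A(X) = I` and the penalty term vanishes.
-/

section MatrixCalculus

variable {l m k : ℕ}

noncomputable def mulLeftCLM (A : Matrix (Fin l) (Fin m) ℝ) :
    Matrix (Fin m) (Fin k) ℝ →L[ℝ] Matrix (Fin l) (Fin k) ℝ :=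
  (mulLeftLinearMap _ ℝ A).toContinuousLinearMap

noncomputable def mulRightCLM (B : Matrix (Fin m) (Fin k) ℝ) :
    Matrix (Fin l) (Fin m) ℝ →L[ℝ] Matrix (Fin l) (Fin k) ℝ :=
  (mulRightLinearMap _ ℝ B).toContinuousLinearMap

noncomputable def transposeCLM : Matrix (Fin l) (Fin m) ℝ →L[ℝ] Matrix (Fin m) (Fin l) ℝ :=
  (transposeLinearEquiv (Fin l) (Fin m) ℝ ℝ).toLinearMap.toContinuousLinearMap

@[simp] lemma mulLeftCLM_apply (A : Matrix (Fin l) (Fin m) ℝ) (B : Matrix (Fin m) (Fin k) ℝ) :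
    mulLeftCLM A B = A * B := rfl

@[simp] lemma mulRightCLM_apply (A : Matrix (Fin l) (Fin m) ℝ) (B : Matrix (Fin m) (Fin k) ℝ) :
    mulRightCLM B A = A * B := rfl

theorem HasFDerivAt.matrix_mul {E : Type*} [NormedAddCommGroup E] [NormedSpace ℝ E]
    {u : E → Matrix (Fin l) (Fin m) ℝ} {v : E → Matrix (Fin m) (Fin k) ℝ}
    {u' : E →L[ℝ] Matrix (Fin l) (Fin m) ℝ} {v' : E →L[ℝ] Matrix (Fin m) (Fin k) ℝ} {x : E}
    (hu : HasFDerivAt u u' x) (hv : HasFDerivAt v v' x) :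
    HasFDerivAt (fun y => u y * v y) (mulRightCLM (v x) ∘L u' + mulLeftCLM (u x) ∘L v') x :=
  let B : Matrix (Fin l) (Fin m) ℝ →ₗ[ℝ] Matrix (Fin m) (Fin k) ℝ →ₗ[ℝ] Matrix (Fin l) (Fin k) ℝ :=
    mulLinearMap ℝ
  (B.toContinuousBilinearMap.hasFDerivAt_of_bilinear hu hv).congr_fderiv <|
    ContinuousLinearMap.ext fun _ => add_comm _ _

end MatrixCalculus

section Gradient

variable {n p m k : ℕ} {X G H : Matrix (Fin n) (Fin p) ℝ}

-- The derivatives produced by the generic calculus lemmas live over the Frobenius normed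
-- instances, which are not reducibly the plain matrix ones; `change` exposes their values.
theorem HasGradAt.add {φ ψ : Matrix (Fin n) (Fin p) ℝ → ℝ} (hφ : HasGradAt φ X G)
    (hψ : HasGradAt ψ X H) : HasGradAt (fun Y => φ Y + ψ Y) X (G + H) :=
  (HasFDerivAt.add hφ hψ).congr_fderiv <| ContinuousLinearMap.ext fun D => by
    change (Gᵀ * D).trace + (Hᵀ * D).trace = ((G + H)ᵀ * D).trace
    rw [transpose_add, Matrix.add_mul, trace_add]

theorem HasGradAt.const_mul {φ : Matrix (Fin n) (Fin p) ℝ → ℝ} (hφ : HasGradAt φ X G) (c : ℝ) :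
    HasGradAt (fun Y => c * φ Y) X (c • G) :=
  (HasFDerivAt.const_mul hφ c).congr_fderiv <| ContinuousLinearMap.ext fun D => by
    change c * (Gᵀ * D).trace = ((c • G)ᵀ * D).trace
    rw [transpose_smul, Matrix.smul_mul, trace_smul, smul_eq_mul]

theorem HasGradAt.comp {f : Matrix (Fin m) (Fin k) ℝ → ℝ}
    {μ : Matrix (Fin n) (Fin p) ℝ → Matrix (Fin m) (Fin k) ℝ}
    {L : Matrix (Fin n) (Fin p) ℝ →L[ℝ] Matrix (Fin m) (Fin k) ℝ} {G : Matrix (Fin m) (Fin k) ℝ}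
    (hf : HasGradAt f (μ X) G) (hμ : HasFDerivAt μ L X)
    (hadj : ∀ D, (Gᵀ * L D).trace = (Hᵀ * D).trace) : HasGradAt (fun Y => f (μ Y)) X H :=
  (HasFDerivAt.comp X hf hμ).congr_fderiv <| ContinuousLinearMap.ext hadj

theorem hasGradAt_trace (S : Matrix (Fin p) (Fin p) ℝ) : HasGradAt trace S 1 :=
  (traceLinearMap (Fin p) ℝ ℝ).toContinuousLinearMap.hasFDerivAt.congr_fderiv <|
    ContinuousLinearMap.ext fun D => by
      change D.trace = (1ᵀ * D).trace
      rw [transpose_one, Matrix.one_mul]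

end Gradient

section Gram

variable {n p : ℕ}

noncomputable def gramDeriv (X : Matrix (Fin n) (Fin p) ℝ) :
    Matrix (Fin n) (Fin p) ℝ →L[ℝ] Matrix (Fin p) (Fin p) ℝ :=
  mulRightCLM X ∘L transposeCLM + mulLeftCLM Xᵀ

@[simp] lemma gramDeriv_apply (X D : Matrix (Fin n) (Fin p) ℝ) :
    gramDeriv X D = Dᵀ * X + Xᵀ * D := rfl

theorem hasFDerivAt_transpose_mul_self (X : Matrix (Fin n) (Fin p) ℝ) :
    HasFDerivAt (fun Y : Matrix (Fin n) (Fin p) ℝ => Yᵀ * Y) (gramDeriv X) X :=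
  HasFDerivAt.matrix_mul transposeCLM.hasFDerivAt (hasFDerivAt_id X)

theorem trace_transpose_mul_gramDeriv (M : Matrix (Fin p) (Fin p) ℝ)
    (X D : Matrix (Fin n) (Fin p) ℝ) :
    (Mᵀ * gramDeriv X D).trace = ((X * (M + Mᵀ))ᵀ * D).trace := by
  have h : (Mᵀ * (Dᵀ * X)).trace = (M * (Xᵀ * D)).trace := by
    rw [← trace_transpose]
    simp only [transpose_mul, transpose_transpose, Matrix.mul_assoc]
    rw [← Matrix.mul_assoc, trace_mul_comm]
  simp only [gramDeriv_apply, transpose_mul, transpose_add, transpose_transpose, Matrix.mul_add,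
    Matrix.add_mul, trace_add, Matrix.mul_assoc, h]
  ring

theorem frobenius_norm_sq_eq_trace {m k : ℕ} (M : Matrix (Fin m) (Fin k) ℝ) :
    ‖M‖ ^ 2 = (Mᵀ * M).trace := by
  rw [frobenius_norm_def, ← Real.rpow_natCast, ← Real.rpow_mul (by positivity)]
  rw [show (1 / 2 : ℝ) * (2 : ℕ) = 1 by norm_num, Real.rpow_one]
  simp only [Real.rpow_two, Real.norm_eq_abs, sq, abs_mul_abs_self, trace, diag_apply, mul_apply,
    transpose_apply]
  exact Finset.sum_comm

theorem hasGradAt_frobenius_norm_sq (S : Matrix (Fin n) (Fin p) ℝ) :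
    HasGradAt (fun M => ‖M‖ ^ 2) S ((2 : ℝ) • S) := by
  have h : HasGradAt (fun M : Matrix (Fin n) (Fin p) ℝ => (Mᵀ * M).trace) S ((2 : ℝ) • S) :=
    (hasGradAt_trace (Sᵀ * S)).comp (μ := fun M => Mᵀ * M) (hasFDerivAt_transpose_mul_self S)
      fun D => by
        rw [trace_transpose_mul_gramDeriv]
        simp only [transpose_one, Matrix.mul_add, Matrix.mul_one, two_smul]
  simpa only [frobenius_norm_sq_eq_trace] using h

end Gram

section ExPenGradient

variable {n p : ℕ}

theorem Amap_transpose (X : Matrix (Fin n) (Fin p) ℝ) : (Amap X)ᵀ = Amap X := by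
  simp [Amap, transpose_sub, transpose_smul, transpose_mul]

theorem Amap_eq_one_of_transpose_mul_self_eq_one {X : Matrix (Fin n) (Fin p) ℝ}
    (hX : Xᵀ * X = 1) : Amap X = 1 := by
  rw [Amap, hX, ← sub_smul]
  norm_num

theorem hasFDerivAt_Amap (X : Matrix (Fin n) (Fin p) ℝ) :
    HasFDerivAt Amap (-((1 / 2 : ℝ) • gramDeriv X)) X :=
  ((hasFDerivAt_transpose_mul_self X).const_smul (1 / 2 : ℝ)).const_sub _

theorem hasFDerivAt_mul_Amap (X : Matrix (Fin n) (Fin p) ℝ) :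
    HasFDerivAt (fun Y => Y * Amap Y)
      (mulRightCLM (Amap X) - (1 / 2 : ℝ) • mulLeftCLM X ∘L gramDeriv X) X :=
  (HasFDerivAt.matrix_mul (hasFDerivAt_id X) (hasFDerivAt_Amap X)).congr_fderiv <|
    ContinuousLinearMap.ext fun D => by
      change D * Amap X + X * -((1 / 2 : ℝ) • gramDeriv X D) =
        D * Amap X - (1 / 2 : ℝ) • (X * gramDeriv X D)
      rw [Matrix.mul_neg, Matrix.mul_smul, sub_eq_add_neg]

theorem hasGradAt_g {f : Matrix (Fin n) (Fin p) ℝ → ℝ} {X G₀ : Matrix (Fin n) (Fin p) ℝ}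
    (hf : HasGradAt f (X * Amap X) G₀) :
    HasGradAt (g f) X (G₀ * Amap X - X * Phi (Xᵀ * G₀)) :=
  hf.comp (μ := fun Y => Y * Amap Y) (hasFDerivAt_mul_Amap X) fun D => by
    have hmulA : (G₀ᵀ * (D * Amap X)).trace = ((G₀ * Amap X)ᵀ * D).trace := by
      rw [transpose_mul, Amap_transpose, ← Matrix.mul_assoc, trace_mul_comm, Matrix.mul_assoc]
    have hgram : (G₀ᵀ * (X * gramDeriv X D)).trace =
        ((X * (Xᵀ * G₀ + (Xᵀ * G₀)ᵀ))ᵀ * D).trace := by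
      rw [← trace_transpose_mul_gramDeriv, transpose_mul, transpose_transpose, Matrix.mul_assoc]
    simp only [_root_.sub_apply, _root_.smul_apply, ContinuousLinearMap.comp_apply,
      mulRightCLM_apply, mulLeftCLM_apply]
    rw [Matrix.mul_sub, trace_sub, hmulA, Matrix.mul_smul, trace_smul, hgram, Phi, Matrix.mul_smul,
      transpose_sub, transpose_smul, Matrix.sub_mul, Matrix.smul_mul, trace_sub, trace_smul]

theorem hasGradAt_norm_sq_transpose_mul_self_sub_one (X : Matrix (Fin n) (Fin p) ℝ) :
    HasGradAt (fun Y : Matrix (Fin n) (Fin p) ℝ => ‖Yᵀ * Y - 1‖ ^ 2) X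
      ((4 : ℝ) • (X * (Xᵀ * X - 1))) :=
  (hasGradAt_frobenius_norm_sq _).comp (μ := fun Y => Yᵀ * Y - 1)
    ((hasFDerivAt_transpose_mul_self X).sub_const 1) fun D => by
      have hS : (Xᵀ * X - 1)ᵀ = Xᵀ * X - 1 := by
        rw [transpose_sub, transpose_mul, transpose_transpose, transpose_one]
      rw [trace_transpose_mul_gramDeriv]
      simp only [transpose_smul, hS]
      rw [← add_smul, Matrix.mul_smul]
      norm_num

end ExPenGradient

theorem statement_1 {n p : ℕ} (f : Matrix (Fin n) (Fin p) ℝ → ℝ) (β : ℝ)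
    (X G₀ : Matrix (Fin n) (Fin p) ℝ)
    (hf : HasGradAt f (X * Amap X) G₀) :
    HasGradAt (hpen f β) X
      (G₀ * Amap X - X * Phi (Xᵀ * G₀) + β • (X * (Xᵀ * X - 1))) ∧
    (Xᵀ * X = 1 →
      G₀ * Amap X - X * Phi (Xᵀ * G₀) + β • (X * (Xᵀ * X - 1))
        = G₀ - X * Phi (Xᵀ * G₀)) := by
  refine ⟨?_, fun hX => ?_⟩
  · have h := (hasGradAt_g hf).add
      ((hasGradAt_norm_sq_transpose_mul_self_sub_one X).const_mul (β / 4))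
    rwa [smul_smul, div_mul_cancel₀ β four_ne_zero] at h
  · rw [Amap_eq_one_of_transpose_mul_self_eq_one hX, hX, sub_self, Matrix.mul_zero, smul_zero,
      add_zero, Matrix.mul_one]

end ExPen
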